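/- Let [A,‖·‖_A] be a normed operator ideal. Then the injective hull of the composition ideal A∘H_v^∞ coincides, with equality of norms, with the composition ideal of the injective hull of A: [(A∘H_v^∞)^inj, ‖·‖_{(A∘H_v^∞)^inj}] = [A^inj∘H_v^∞, ‖·‖_{A^inj∘H_v^∞}]. In particular, the normed weighted holomorphic ideal [A^inj∘H_v^∞, ‖·‖_{A^inj∘H_v^∞}] is injective. -/

import Mathlib

open scoped ENNReal
open Set

noncomputable section

universe u v w

/-- A bundled complex Banach space. -/
structure BanachSp : Type (u + 1) where
  α : Type u
  [grp : NormedAddCommGroup α]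
  [mod : NormedSpace ℂ α]
  [cpl : CompleteSpace α]

attribute [instance] BanachSp.grp BanachSp.mod BanachSp.cpl

instance : CoeSort BanachSp (Type u) := ⟨BanachSp.α⟩

section Defs

variable {E : Type u} {F : Type v} [NormedAddCommGroup E] [NormedSpace ℂ E]
  [NormedAddCommGroup F] [NormedSpace ℂ F]

/-- `v` is a weight on `U`: continuous and strictly positive there. -/
def IsWeight (U : Set E) (v : E → ℝ) : Prop :=
  ContinuousOn v U ∧ ∀ x ∈ U, 0 < v x

/-- `f` belongs to `H_v^∞(U, F)`: holomorphic on `U` with `sup_{x ∈ U} v x * ‖f x‖ < ∞`. -/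
def HvBdd (U : Set E) (v : E → ℝ) (f : E → F) : Prop :=
  DifferentiableOn ℂ f U ∧ BddAbove ((fun x => v x * ‖f x‖) '' U)

/-- The weighted supremum norm `‖f‖_v = sup_{x ∈ U} v x * ‖f x‖`. -/
def hvNorm (U : Set E) (v : E → ℝ) (f : E → F) : ℝ :=
  sSup ((fun x => v x * ‖f x‖) '' U)

end Defs

section Iota

variable (F : Type u) [NormedAddCommGroup F] [NormedSpace ℂ F]

/-- The closed unit ball of the dual space `F*`. -/
def BallDual : Type u := {φ : StrongDual ℂ F // ‖φ‖ ≤ 1}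

instance : Nonempty (BallDual F) := ⟨⟨0, by simp⟩⟩

/-- `ℓ∞(B_{F*})`, the space of bounded scalar functions on the closed unit ball of `F*`. -/
abbrev Linf : Type u := lp (fun _ : BallDual F => ℂ) ∞

/-- The canonical embedding `ι_F : F → ℓ∞(B_{F*})`, `⟨ι_F y, φ⟩ = φ y`. -/
def iotaFun (y : F) : Linf F :=
  ⟨fun φ => φ.1 y, memℓp_infty ⟨‖y‖, by
    rintro r ⟨φ, rfl⟩
    calc ‖φ.1 y‖ ≤ ‖φ.1‖ * ‖y‖ := φ.1.le_opNorm y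
      _ ≤ 1 * ‖y‖ := by
          have := φ.2
          exact mul_le_mul_of_nonneg_right this (norm_nonneg y)
      _ = ‖y‖ := one_mul _⟩⟩

/-- The canonical embedding `ι_F : F → ℓ∞(B_{F*})` as a continuous linear map. -/
def iota : F →L[ℂ] Linf F :=
  LinearMap.mkContinuous
    { toFun := iotaFun F
      map_add' := by
        intro y z
        apply lp.ext
        rw [lp.coeFn_add]
        funext φ
        show φ.1 (y + z) = φ.1 y + φ.1 z
        exact map_add φ.1 y z
      map_smul' := by
        intro c y
        apply lp.ext
        rw [lp.coeFn_smul]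
        funext φ
        show φ.1 (c • y) = c • φ.1 y
        exact map_smul φ.1 c y }
    1 (by
      intro y
      rw [one_mul]
      refine lp.norm_le_of_forall_le (norm_nonneg y) fun φ => ?_
      calc ‖φ.1 y‖ ≤ ‖φ.1‖ * ‖y‖ := φ.1.le_opNorm y
        _ ≤ 1 * ‖y‖ := mul_le_mul_of_nonneg_right φ.2 (norm_nonneg y)
        _ = ‖y‖ := one_mul _)

/-- `ℓ∞(B_{F*})` as a bundled Banach space. -/
def LinfSp : BanachSp.{u} := ⟨Linf F⟩

end Iota

/-- An assignment of a class of weighted holomorphic mappings, together with a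
"norm" function, to every component `(U, v, F)`. -/
structure WHAssignment : Type (u + 1) where
  mem : ∀ (E : BanachSp.{u}) (U : Set E) (v : E → ℝ) (F : BanachSp.{u}), (E → F) → Prop
  nrm : ∀ (E : BanachSp.{u}) (U : Set E) (v : E → ℝ) (F : BanachSp.{u}), (E → F) → ℝ

/-- `[I, ‖·‖_I]` is a normed weighted holomorphic ideal. -/
structure IsNormedWHIdeal (I : WHAssignment.{u}) : Prop where
  mem_hv : ∀ (E : BanachSp.{u}) (U : Set E.α) (v : E.α → ℝ), IsOpen U → IsWeight U v →
    ∀ (F : BanachSp.{u}) (f : E.α → F.α), I.mem E U v F f → HvBdd U v f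
  zero_mem : ∀ (E : BanachSp.{u}) (U : Set E.α) (v : E.α → ℝ), IsOpen U → IsWeight U v →
    ∀ (F : BanachSp.{u}), I.mem E U v F (fun _ => 0)
  add_mem : ∀ (E : BanachSp.{u}) (U : Set E.α) (v : E.α → ℝ), IsOpen U → IsWeight U v →
    ∀ (F : BanachSp.{u}) (f g : E.α → F.α), I.mem E U v F f → I.mem E U v F g →
      I.mem E U v F (fun x => f x + g x)
  smul_mem : ∀ (E : BanachSp.{u}) (U : Set E.α) (v : E.α → ℝ), IsOpen U → IsWeight U v →
    ∀ (F : BanachSp.{u}) (c : ℂ) (f : E.α → F.α), I.mem E U v F f →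
      I.mem E U v F (fun x => c • f x)
  nrm_nonneg : ∀ (E : BanachSp.{u}) (U : Set E.α) (v : E.α → ℝ), IsOpen U → IsWeight U v →
    ∀ (F : BanachSp.{u}) (f : E.α → F.α), I.mem E U v F f → 0 ≤ I.nrm E U v F f
  nrm_eq_zero : ∀ (E : BanachSp.{u}) (U : Set E.α) (v : E.α → ℝ), IsOpen U → IsWeight U v →
    ∀ (F : BanachSp.{u}) (f : E.α → F.α), I.mem E U v F f → I.nrm E U v F f = 0 →
      ∀ x ∈ U, f x = 0
  nrm_add_le : ∀ (E : BanachSp.{u}) (U : Set E.α) (v : E.α → ℝ), IsOpen U → IsWeight U v →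
    ∀ (F : BanachSp.{u}) (f g : E.α → F.α), I.mem E U v F f → I.mem E U v F g →
      I.nrm E U v F (fun x => f x + g x) ≤ I.nrm E U v F f + I.nrm E U v F g
  nrm_smul : ∀ (E : BanachSp.{u}) (U : Set E.α) (v : E.α → ℝ), IsOpen U → IsWeight U v →
    ∀ (F : BanachSp.{u}) (c : ℂ) (f : E.α → F.α), I.mem E U v F f →
      I.nrm E U v F (fun x => c • f x) = ‖c‖ * I.nrm E U v F f
  hv_le_nrm : ∀ (E : BanachSp.{u}) (U : Set E.α) (v : E.α → ℝ), IsOpen U → IsWeight U v →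
    ∀ (F : BanachSp.{u}) (f : E.α → F.α), I.mem E U v F f →
      hvNorm U v f ≤ I.nrm E U v F f
  unit_mem : ∀ (E : BanachSp.{u}) (U : Set E.α) (v : E.α → ℝ), IsOpen U → IsWeight U v →
    ∀ (F : BanachSp.{u}) (h : E.α → ℂ), HvBdd U v h → ∀ y : F.α,
      I.mem E U v F (fun x => h x • y) ∧
        I.nrm E U v F (fun x => h x • y) = hvNorm U v h * ‖y‖
  comp_mem : ∀ (E : BanachSp.{u}) (U : Set E.α) (v : E.α → ℝ), IsOpen U → IsWeight U v →
    ∀ (V : Set E.α), IsOpen V → V ⊆ U →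
    ∀ h : E.α → E.α, DifferentiableOn ℂ h V → Set.MapsTo h V U →
    ∀ c : ℝ, 0 ≤ c → (∀ x ∈ V, v x ≤ c * v (h x)) →
    ∀ (F G : BanachSp.{u}) (T : F.α →L[ℂ] G.α) (f : E.α → F.α), I.mem E U v F f →
      I.mem E V v G (fun x => T (f (h x))) ∧
        I.nrm E V v G (fun x => T (f (h x))) ≤ ‖T‖ * I.nrm E U v F f * c

/-- `[I, ‖·‖_I]` is a Banach weighted holomorphic ideal: a normed one with complete components. -/
structure IsBanachWHIdeal (I : WHAssignment.{u}) extends IsNormedWHIdeal I : Prop where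
  complete : ∀ (E : BanachSp.{u}) (U : Set E.α) (v : E.α → ℝ), IsOpen U → IsWeight U v →
    ∀ (F : BanachSp.{u}) (f : ℕ → E.α → F.α), (∀ n, I.mem E U v F (f n)) →
      (∀ ε : ℝ, 0 < ε → ∃ N : ℕ, ∀ m ≥ N, ∀ n ≥ N,
        I.nrm E U v F (fun x => f m x - f n x) < ε) →
      ∃ g : E.α → F.α, I.mem E U v F g ∧
        ∀ ε : ℝ, 0 < ε → ∃ N : ℕ, ∀ n ≥ N, I.nrm E U v F (fun x => f n x - g x) < ε

/-- Injectivity of a normed weighted holomorphic ideal. -/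
def WHInjective (I : WHAssignment.{u}) : Prop :=
  ∀ (E : BanachSp.{u}) (U : Set E.α) (v : E.α → ℝ), IsOpen U → IsWeight U v →
  ∀ (F G : BanachSp.{u}) (f : E.α → F.α), HvBdd U v f →
  ∀ ι : F.α →ₗᵢ[ℂ] G.α, I.mem E U v G (fun x => ι (f x)) →
    I.mem E U v F f ∧ I.nrm E U v F f = I.nrm E U v G (fun x => ι (f x))

/-- The injective hull `[I^inj, ‖·‖_{I^inj}]` of a weighted holomorphic ideal. -/
def whInj (I : WHAssignment.{u}) : WHAssignment.{u} where
  mem E U v F f := HvBdd U v f ∧ I.mem E U v (LinfSp F.α) (fun x => iota F.α (f x))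
  nrm E U v F f := I.nrm E U v (LinfSp F.α) (fun x => iota F.α (f x))

/-- The order relation `[I, ‖·‖_I] ≤ [J, ‖·‖_J]` between weighted holomorphic ideals. -/
def WHle (I J : WHAssignment.{u}) : Prop :=
  ∀ (E : BanachSp.{u}) (U : Set E.α) (v : E.α → ℝ), IsOpen U → IsWeight U v →
  ∀ (F : BanachSp.{u}) (f : E.α → F.α), I.mem E U v F f →
    J.mem E U v F f ∧ J.nrm E U v F f ≤ I.nrm E U v F f

/-- The domination property: `‖Σ λᵢ v(xᵢ) f(xᵢ)‖ ≤ ‖Σ λᵢ v(xᵢ) g(xᵢ)‖` for all finite families. -/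
def Dominates {E : Type u} {F : Type v} {G : Type w} [NormedAddCommGroup E] [NormedSpace ℂ E]
    [NormedAddCommGroup F] [NormedSpace ℂ F] [NormedAddCommGroup G] [NormedSpace ℂ G]
    (U : Set E) (v : E → ℝ) (f : E → F) (g : E → G) : Prop :=
  ∀ (n : ℕ) (lam : Fin n → ℂ) (x : Fin n → E), (∀ i, x i ∈ U) →
    ‖∑ i, lam i • v (x i) • f (x i)‖ ≤ ‖∑ i, lam i • v (x i) • g (x i)‖


/-- An assignment of a class of operators and a "norm" to every pair of Banach spaces. -/
structure OpAssignment : Type (u + 1) where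
  mem : ∀ (E F : BanachSp.{u}), (E.α →L[ℂ] F.α) → Prop
  nrm : ∀ (E F : BanachSp.{u}), (E.α →L[ℂ] F.α) → ℝ

/-- `A` is an operator ideal (no norm conditions). -/
structure IsOpIdeal (A : OpAssignment.{u}) : Prop where
  zero_mem : ∀ (E F : BanachSp.{u}), A.mem E F 0
  add_mem : ∀ (E F : BanachSp.{u}) (S T : E.α →L[ℂ] F.α),
    A.mem E F S → A.mem E F T → A.mem E F (S + T)
  rank_one_mem : ∀ (E F : BanachSp.{u}) (φ : E.α →L[ℂ] ℂ) (y : F.α),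
    A.mem E F (φ.smulRight y)
  comp_mem : ∀ (E₀ E F F₀ : BanachSp.{u}) (R : E₀.α →L[ℂ] E.α) (T : E.α →L[ℂ] F.α)
    (S : F.α →L[ℂ] F₀.α), A.mem E F T → A.mem E₀ F₀ ((S.comp T).comp R)

/-- `[A, ‖·‖_A]` is a normed operator ideal in the sense of Pietsch. -/
structure IsNormedOpIdeal (A : OpAssignment.{u}) : Prop where
  zero_mem : ∀ (E F : BanachSp.{u}), A.mem E F 0
  add_mem : ∀ (E F : BanachSp.{u}) (S T : E.α →L[ℂ] F.α),
    A.mem E F S → A.mem E F T → A.mem E F (S + T)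
  smul_mem : ∀ (E F : BanachSp.{u}) (c : ℂ) (T : E.α →L[ℂ] F.α),
    A.mem E F T → A.mem E F (c • T)
  nrm_nonneg : ∀ (E F : BanachSp.{u}) (T : E.α →L[ℂ] F.α), A.mem E F T → 0 ≤ A.nrm E F T
  nrm_add_le : ∀ (E F : BanachSp.{u}) (S T : E.α →L[ℂ] F.α), A.mem E F S → A.mem E F T →
    A.nrm E F (S + T) ≤ A.nrm E F S + A.nrm E F T
  nrm_smul : ∀ (E F : BanachSp.{u}) (c : ℂ) (T : E.α →L[ℂ] F.α), A.mem E F T →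
    A.nrm E F (c • T) = ‖c‖ * A.nrm E F T
  op_le_nrm : ∀ (E F : BanachSp.{u}) (T : E.α →L[ℂ] F.α), A.mem E F T → ‖T‖ ≤ A.nrm E F T
  rank_one_mem : ∀ (E F : BanachSp.{u}) (φ : E.α →L[ℂ] ℂ) (y : F.α),
    A.mem E F (φ.smulRight y) ∧ A.nrm E F (φ.smulRight y) = ‖φ‖ * ‖y‖
  comp_mem : ∀ (E₀ E F F₀ : BanachSp.{u}) (R : E₀.α →L[ℂ] E.α) (T : E.α →L[ℂ] F.α)
    (S : F.α →L[ℂ] F₀.α), A.mem E F T → A.mem E₀ F₀ ((S.comp T).comp R) ∧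
      A.nrm E₀ F₀ ((S.comp T).comp R) ≤ ‖S‖ * A.nrm E F T * ‖R‖

/-- `[A, ‖·‖_A]` is a Banach operator ideal. -/
structure IsBanachOpIdeal (A : OpAssignment.{u}) extends IsNormedOpIdeal A : Prop where
  complete : ∀ (E F : BanachSp.{u}) (T : ℕ → (E.α →L[ℂ] F.α)), (∀ n, A.mem E F (T n)) →
    (∀ ε : ℝ, 0 < ε → ∃ N : ℕ, ∀ m ≥ N, ∀ n ≥ N, A.nrm E F (T m - T n) < ε) →
    ∃ S, A.mem E F S ∧ ∀ ε : ℝ, 0 < ε → ∃ N : ℕ, ∀ n ≥ N, A.nrm E F (T n - S) < ε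

/-- Injectivity of a normed operator ideal. -/
def OpInjective (A : OpAssignment.{u}) : Prop :=
  ∀ (E F G : BanachSp.{u}) (ι : F.α →ₗᵢ[ℂ] G.α) (T : E.α →L[ℂ] F.α),
    A.mem E G (ι.toContinuousLinearMap.comp T) →
      A.mem E F T ∧ A.nrm E F T = A.nrm E G (ι.toContinuousLinearMap.comp T)

/-- The injective hull `[A^inj, ‖·‖_{A^inj}]` of an operator ideal. -/
def opInj (A : OpAssignment.{u}) : OpAssignment.{u} where
  mem E F T := A.mem E (LinfSp F.α) ((iota F.α).comp T)
  nrm E F T := A.nrm E (LinfSp F.α) ((iota F.α).comp T)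

/-- The closure `\bar{A}` of an operator ideal, under the operator norm. -/
def opClosure (A : OpAssignment.{u}) : OpAssignment.{u} where
  mem E F T := ∀ ε : ℝ, 0 < ε → ∃ S, A.mem E F S ∧ ‖T - S‖ ≤ ε
  nrm E F T := ‖T‖

/-- The composition ideal `[A ∘ H_v^∞, ‖·‖_{A ∘ H_v^∞}]`. -/
def compWH (A : OpAssignment.{u}) : WHAssignment.{u} where
  mem E U v F f := ∃ (G : BanachSp.{u}) (T : G.α →L[ℂ] F.α) (g : E.α → G.α),
    A.mem G F T ∧ HvBdd U v g ∧ ∀ x ∈ U, f x = T (g x)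
  nrm E U v F f := sInf {r | ∃ (G : BanachSp.{u}) (T : G.α →L[ℂ] F.α) (g : E.α → G.α),
    A.mem G F T ∧ HvBdd U v g ∧ (∀ x ∈ U, f x = T (g x)) ∧ r = A.nrm G F T * hvNorm U v g}

/-- The closure of a weighted holomorphic ideal in `(H_v^∞, ‖·‖_v)`. -/
def whClosure (I : WHAssignment.{u}) : WHAssignment.{u} where
  mem E U v F f := HvBdd U v f ∧ ∀ ε : ℝ, 0 < ε → ∃ g : E.α → F.α,
    I.mem E U v F g ∧ ∀ x ∈ U, v x * ‖f x - g x‖ ≤ ε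
  nrm E U v F f := hvNorm U v f

/-! If `ι_F ∘ f = T ∘ g` with `T ∈ A(G, ℓ∞(B_{F*}))`, shrink `G` to the closed subspace
`T⁻¹(ι_F F)`: it still contains `g(U)`, so `g` stays holomorphic with the same weighted norm,
and on it `T` lifts to an `S` with `ι_F ∘ S = T|`, whence `‖S‖_{A^inj} ≤ ‖T‖_A`. The converse
is `ι_F ∘ (T ∘ g) = (ι_F ∘ T) ∘ g`. For injectivity the same shrinking works along any isometry
`ι : F → G`; the spaces `ℓ∞(B_{F*})`, `ℓ∞(B_{G*})` are `1`-injective (Hahn–Banach coordinatewise),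
so `ι_F` and `ι_G ∘ ι` extend to contractions between them and `A^inj`-norms can be compared. -/

lemma opNorm_iota_le (F : Type*) [NormedAddCommGroup F] [NormedSpace ℂ F] : ‖iota F‖ ≤ 1 :=
  LinearMap.mkContinuous_norm_le _ zero_le_one _

lemma norm_iota {F : Type*} [NormedAddCommGroup F] [NormedSpace ℂ F] (y : F) :
    ‖iota F y‖ = ‖y‖ := by
  refine le_antisymm ?_ ?_
  · simpa using (iota F).le_of_opNorm_le (opNorm_iota_le F) y
  · obtain ⟨φ, hφ, hφy⟩ := exists_dual_vector'' ℂ y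
    calc ‖y‖ = ‖φ y‖ := by simp [hφy]
      _ = ‖iota F y ⟨φ, hφ⟩‖ := rfl
      _ ≤ ‖iota F y‖ := lp.norm_apply_le_norm ENNReal.top_ne_zero _ _

def iotaIso (F : Type*) [NormedAddCommGroup F] [NormedSpace ℂ F] : F →ₗᵢ[ℂ] Linf F :=
  ⟨(iota F).toLinearMap, norm_iota⟩

section LinftyInjective

variable {ι Z : Type*} [NormedAddCommGroup Z] [NormedSpace ℂ Z]

def linftyOfDualFamily (φ : ι → StrongDual ℂ Z) (hφ : ∀ i, ‖φ i‖ ≤ 1) :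
    Z →L[ℂ] lp (fun _ : ι => ℂ) ∞ :=
  LinearMap.mkContinuous
    { toFun := fun z => ⟨fun i => φ i z, memℓp_infty ⟨‖z‖, by
        rintro _ ⟨i, rfl⟩
        simpa using (φ i).le_of_opNorm_le (hφ i) z⟩⟩
      map_add' := fun a b => lp.ext <| funext fun i => map_add (φ i) a b
      map_smul' := fun c a => lp.ext <| funext fun i => map_smul (φ i) c a }
    1 fun z => by
      simpa using lp.norm_le_of_forall_le (norm_nonneg z)
        fun i => by simpa using (φ i).le_of_opNorm_le (hφ i) z

lemma exists_extension_to_linfty {F : Type*} [NormedAddCommGroup F] [NormedSpace ℂ F]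
    (κ : F →ₗᵢ[ℂ] Z) (u : F →L[ℂ] lp (fun _ : ι => ℂ) ∞) (hu : ‖u‖ ≤ 1) :
    ∃ P : Z →L[ℂ] lp (fun _ : ι => ℂ) ∞, ‖P‖ ≤ 1 ∧ P.comp κ.toContinuousLinearMap = u := by
  have key : ∀ i, ∃ φ : StrongDual ℂ Z, ‖φ‖ ≤ 1 ∧ ∀ y, φ (κ y) = u y i := by
    intro i
    let φ₀ : StrongDual ℂ (LinearMap.range κ.toLinearMap) :=
      (lp.evalCLM ℂ _ ∞ i).comp
        (u.comp κ.equivRange.symm.toContinuousLinearEquiv.toContinuousLinearMap)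
    obtain ⟨φ, hφ, hφnorm⟩ := exists_extension_norm_eq _ φ₀
    refine ⟨φ, ?_, fun y => ?_⟩
    · rw [hφnorm]
      refine ContinuousLinearMap.opNorm_le_bound _ zero_le_one fun z => ?_
      calc ‖φ₀ z‖ ≤ ‖u (κ.equivRange.symm z)‖ := lp.norm_apply_le_norm ENNReal.top_ne_zero _ _
        _ ≤ 1 * ‖κ.equivRange.symm z‖ := u.le_of_opNorm_le hu _
        _ = 1 * ‖z‖ := by rw [LinearIsometryEquiv.norm_map]
    · simpa [φ₀, lp.evalCLM] using hφ (κ.equivRange y)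
  choose φ hφ hφκ using key
  exact ⟨linftyOfDualFamily φ hφ, LinearMap.mkContinuous_norm_le _ zero_le_one _,
    ContinuousLinearMap.ext fun y => lp.ext <| funext fun i => hφκ i y⟩

end LinftyInjective

section Weighted

variable {E F G : Type*} [NormedAddCommGroup F] [NormedAddCommGroup G] {U : Set E} {v : E → ℝ}

lemma hvNorm_nonneg [NormedAddCommGroup E] (hv : IsWeight U v) (f : E → F) : 0 ≤ hvNorm U v f :=
  Real.sSup_nonneg <| by
    rintro _ ⟨x, hx, rfl⟩
    exact mul_nonneg (hv.2 x hx).le (norm_nonneg _)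

lemma image_weighted_norm_congr {f : E → F} {g : E → G} (h : ∀ x ∈ U, ‖f x‖ = ‖g x‖) :
    (fun x => v x * ‖f x‖) '' U = (fun x => v x * ‖g x‖) '' U :=
  image_congr fun x hx => by rw [h x hx]

lemma hvNorm_congr_norm {f : E → F} {g : E → G} (h : ∀ x ∈ U, ‖f x‖ = ‖g x‖) :
    hvNorm U v f = hvNorm U v g :=
  congrArg sSup (image_weighted_norm_congr h)

lemma HvBdd.congr_norm [NormedAddCommGroup E] [NormedSpace ℂ E] [NormedSpace ℂ F]
    [NormedSpace ℂ G] {f : E → F} {g : E → G} (hg : HvBdd U v g)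
    (hfg : ∀ x ∈ U, ‖f x‖ = ‖g x‖) (hf : DifferentiableOn ℂ f U) : HvBdd U v f :=
  ⟨hf, image_weighted_norm_congr hfg ▸ hg.2⟩

lemma HvBdd.clm_comp [NormedAddCommGroup E] [NormedSpace ℂ E] [NormedSpace ℂ F]
    [NormedSpace ℂ G] (hv : IsWeight U v) (T : G →L[ℂ] F) {g : E → G} (hg : HvBdd U v g)
    {f : E → F} (hfg : ∀ x ∈ U, f x = T (g x)) : HvBdd U v f := by
  refine ⟨(T.differentiable.comp_differentiableOn hg.1).congr hfg, ?_⟩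
  obtain ⟨C, hC⟩ := hg.2
  refine ⟨‖T‖ * C, ?_⟩
  rintro _ ⟨x, hx, rfl⟩
  calc v x * ‖f x‖ ≤ ‖T‖ * (v x * ‖g x‖) := by
        rw [hfg x hx, mul_left_comm]
        exact mul_le_mul_of_nonneg_left (T.le_opNorm _) (hv.2 x hx).le
    _ ≤ ‖T‖ * C := mul_le_mul_of_nonneg_left (hC ⟨x, hx, rfl⟩) (norm_nonneg T)

end Weighted

section ClosedSubspace

variable {𝕜 E H : Type*} [NontriviallyNormedField 𝕜] [NormedAddCommGroup E] [NormedSpace 𝕜 E]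
  [NormedAddCommGroup H] [NormedSpace 𝕜 H] {M : Submodule 𝕜 H}

lemma HasFDerivAt.apply_mem_of_forall_mem (hM : IsClosed (M : Set H)) {g : E → H}
    {g' : E →L[𝕜] H} {x : E} (hg : HasFDerivAt g g' x) (hgM : ∀ y, g y ∈ M) (w : E) :
    g' w ∈ M :=
  hM.mem_of_tendsto (hg.lim w (c := id) tendsto_norm_cobounded_atTop)
    (.of_forall fun c => M.smul_mem c (M.sub_mem (hgM _) (hgM _)))

lemma Submodule.differentiableOn_of_subtype_comp (hM : IsClosed (M : Set H)) {U : Set E}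
    (hU : IsOpen U) {g : E → M} (hg : DifferentiableOn 𝕜 (fun x => (g x : H)) U) :
    DifferentiableOn 𝕜 g U := by
  intro x hx
  have hgx := (hg.differentiableAt (hU.mem_nhds hx)).hasFDerivAt
  have hD : HasFDerivAt g ((fderiv 𝕜 (fun x => (g x : H)) x).codRestrict M
      (hgx.apply_mem_of_forall_mem hM fun y => (g y).2)) x := by
    refine .of_isLittleO ?_
    have := hgx.isLittleO
    rw [← Asymptotics.isLittleO_norm_left] at this ⊢
    exact this
  exact hD.differentiableAt.differentiableWithinAt

end ClosedSubspace

lemma exists_factorization_through_isometry {E : Type*} [NormedAddCommGroup E]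
    [NormedSpace ℂ E] {U : Set E} {v : E → ℝ} (hU : IsOpen U) {F Z : Type*}
    [NormedAddCommGroup F] [NormedSpace ℂ F] [CompleteSpace F] [NormedAddCommGroup Z]
    [NormedSpace ℂ Z] (κ : F →ₗᵢ[ℂ] Z) {H : BanachSp.{u}} (T : H.α →L[ℂ] Z) {g : E → H.α}
    (hg : HvBdd U v g) {f : E → F} (hfg : ∀ x ∈ U, κ (f x) = T (g x)) :
    ∃ (H₀ : BanachSp.{u}) (j : H₀.α →L[ℂ] H.α) (S : H₀.α →L[ℂ] F) (g₀ : E → H₀.α),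
      ‖j‖ ≤ 1 ∧ κ.toContinuousLinearMap.comp S = T.comp j ∧ HvBdd U v g₀ ∧
        hvNorm U v g₀ = hvNorm U v g ∧ ∀ x ∈ U, f x = S (g₀ x) := by
  classical
  let M : Submodule ℂ H.α := (LinearMap.range κ.toLinearMap).comap T.toLinearMap
  have hM : IsClosed (M : Set H.α) :=
    κ.isometry.isClosedEmbedding.isClosed_range.preimage T.continuous
  have : CompleteSpace M := hM.completeSpace_coe
  have hgM : ∀ x ∈ U, g x ∈ M := fun x hx => ⟨f x, hfg x hx⟩
  let g₀ : E → M := fun x => if h : g x ∈ M then ⟨g x, h⟩ else 0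
  have hg₀ : ∀ x ∈ U, (g₀ x : H.α) = g x := fun x hx => by simp [g₀, hgM x hx]
  let S : M →L[ℂ] F := κ.equivRange.symm.toContinuousLinearEquiv.toContinuousLinearMap.comp
    ((T.comp M.subtypeL).codRestrict _ fun z => z.2)
  have hκS : κ.toContinuousLinearMap.comp S = T.comp M.subtypeL := by
    ext z
    change κ (κ.equivRange.symm _) = T z
    rw [← κ.equivRange_apply_coe, LinearIsometryEquiv.apply_symm_apply]
    rfl
  have hnorm : ∀ x ∈ U, ‖g₀ x‖ = ‖g x‖ := fun x hx => by rw [← hg₀ x hx]; rfl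
  refine ⟨⟨M⟩, M.subtypeL, S, g₀, M.norm_subtypeL_le, hκS, hg.congr_norm hnorm ?_,
    hvNorm_congr_norm hnorm, fun x hx => κ.injective ?_⟩
  · exact M.differentiableOn_of_subtype_comp hM hU (hg.1.congr hg₀)
  · rw [hfg x hx, ← hg₀ x hx]
    exact (DFunLike.congr_fun hκS (g₀ x)).symm

lemma compWH_mem_and_nrm_le_of_factorization {A B : OpAssignment.{u}} {E F F' : BanachSp.{u}}
    {U : Set E.α} {v : E.α → ℝ} (hv : IsWeight U v)
    (hB : ∀ (G : BanachSp.{u}) (T : G.α →L[ℂ] F'.α), B.mem G F' T → 0 ≤ B.nrm G F' T)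
    {f : E.α → F.α} {f' : E.α → F'.α} (hf : (compWH A).mem E U v F f)
    (h : ∀ (G : BanachSp.{u}) (T : G.α →L[ℂ] F.α) (g : E.α → G.α), A.mem G F T →
      HvBdd U v g → (∀ x ∈ U, f x = T (g x)) →
      ∃ (G' : BanachSp.{u}) (T' : G'.α →L[ℂ] F'.α) (g' : E.α → G'.α), B.mem G' F' T' ∧
        HvBdd U v g' ∧ (∀ x ∈ U, f' x = T' (g' x)) ∧
        B.nrm G' F' T' * hvNorm U v g' ≤ A.nrm G F T * hvNorm U v g) :
    (compWH B).mem E U v F' f' ∧ (compWH B).nrm E U v F' f' ≤ (compWH A).nrm E U v F f := by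
  obtain ⟨G, T, g, hT, hg, hfg⟩ := hf
  obtain ⟨G', T', g', hT', hg', hfg', -⟩ := h G T g hT hg hfg
  refine ⟨⟨G', T', g', hT', hg', hfg'⟩, le_csInf ⟨_, G, T, g, hT, hg, hfg, rfl⟩ ?_⟩
  rintro _ ⟨G, T, g, hT, hg, hfg, rfl⟩
  obtain ⟨G', T', g', hT', hg', hfg', hle⟩ := h G T g hT hg hfg
  refine le_trans (csInf_le ⟨0, ?_⟩ ⟨G', T', g', hT', hg', hfg', rfl⟩) hle
  rintro _ ⟨G'', T'', g'', hT'', -, -, rfl⟩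
  exact mul_nonneg (hB G'' T'' hT'') (hvNorm_nonneg hv g'')

lemma WHle.mem_iff_and_nrm_eq {I J : WHAssignment.{u}} (hIJ : WHle I J) (hJI : WHle J I)
    (E : BanachSp.{u}) (U : Set E.α) (v : E.α → ℝ) (hU : IsOpen U) (hv : IsWeight U v)
    (F : BanachSp.{u}) (f : E.α → F.α) :
    (I.mem E U v F f ↔ J.mem E U v F f) ∧ (I.mem E U v F f → I.nrm E U v F f = J.nrm E U v F f) :=
  ⟨⟨fun h => (hIJ E U v hU hv F f h).1, fun h => (hJI E U v hU hv F f h).1⟩,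
    fun h => le_antisymm (hJI E U v hU hv F f (hIJ E U v hU hv F f h).1).2
      (hIJ E U v hU hv F f h).2⟩

section InjectiveHull

variable {A : OpAssignment.{u}}

lemma IsNormedOpIdeal.opInj_mem_of_iota_comp_eq (hA : IsNormedOpIdeal A)
    {H G F W : BanachSp.{u}} {S : H.α →L[ℂ] F.α} {T : G.α →L[ℂ] W.α} {j : H.α →L[ℂ] G.α}
    {Φ : W.α →L[ℂ] Linf F.α} (hT : A.mem G W T) (hΦ : ‖Φ‖ ≤ 1) (hj : ‖j‖ ≤ 1)
    (h : (iota F.α).comp S = (Φ.comp T).comp j) :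
    (opInj A).mem H F S ∧ (opInj A).nrm H F S ≤ A.nrm G W T := by
  obtain ⟨hmem, hle⟩ := hA.comp_mem H G W (LinfSp F.α) j T Φ hT
  refine ⟨show A.mem _ _ _ by rw [h]; exact hmem, ?_⟩
  calc (opInj A).nrm H F S = A.nrm H (LinfSp F.α) ((Φ.comp T).comp j) := congrArg _ h
    _ ≤ ‖Φ‖ * A.nrm G W T * ‖j‖ := hle
    _ ≤ 1 * A.nrm G W T * 1 := by have := hA.nrm_nonneg _ _ _ hT; gcongr
    _ = A.nrm G W T := by ring

lemma whInj_compWH_le_compWH_opInj (hA : IsNormedOpIdeal A) :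
    WHle (whInj (compWH A)) (compWH (opInj A)) := by
  intro E U v hU hv F f hf
  refine compWH_mem_and_nrm_le_of_factorization (A := A) (B := opInj A) (F := LinfSp F.α) hv
    (fun G T hT => hA.nrm_nonneg _ _ _ hT) hf.2 ?_
  intro G T g hT hg hfg
  obtain ⟨H, j, S, g₀, hj, hSj, hg₀, hnorm, hfS⟩ :=
    exists_factorization_through_isometry hU (iotaIso F.α) T hg hfg
  have hSj' : (iota F.α).comp S = ((ContinuousLinearMap.id ℂ (LinfSp F.α).α).comp T).comp j := by
    rw [ContinuousLinearMap.id_comp]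
    exact hSj
  obtain ⟨hS, hSle⟩ :=
    hA.opInj_mem_of_iota_comp_eq (W := LinfSp F.α) hT ContinuousLinearMap.norm_id_le hj hSj'
  refine ⟨H, S, g₀, hS, hg₀, hfS, ?_⟩
  rw [hnorm]
  exact mul_le_mul_of_nonneg_right hSle (hvNorm_nonneg hv g)

lemma compWH_opInj_le_whInj_compWH (hA : IsNormedOpIdeal A) :
    WHle (compWH (opInj A)) (whInj (compWH A)) := by
  intro E U v _ hv F f hf
  have hιf := compWH_mem_and_nrm_le_of_factorization (A := opInj A) (B := A) (F' := LinfSp F.α)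
    (f' := fun x => iota F.α (f x)) hv (fun G T hT => hA.nrm_nonneg _ _ _ hT) hf
    fun G T g hT hg hfg =>
      ⟨G, (iota F.α).comp T, g, hT, hg, fun x hx => by rw [hfg x hx]; rfl, le_rfl⟩
  obtain ⟨G, T, g, -, hg, hfg⟩ := hf
  exact ⟨⟨hg.clm_comp hv T hfg, hιf.1⟩, hιf.2⟩

lemma compWH_opInj_of_isometry_comp (hA : IsNormedOpIdeal A) {E : BanachSp.{u}} {U : Set E.α}
    {v : E.α → ℝ} (hU : IsOpen U) (hv : IsWeight U v) {F G : BanachSp.{u}}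
    (ι : F.α →ₗᵢ[ℂ] G.α) {f : E.α → F.α}
    (hιf : (compWH (opInj A)).mem E U v G (fun x => ι (f x))) :
    (compWH (opInj A)).mem E U v F f ∧
      (compWH (opInj A)).nrm E U v F f ≤ (compWH (opInj A)).nrm E U v G (fun x => ι (f x)) := by
  obtain ⟨P, hP, hPι⟩ :=
    exists_extension_to_linfty ((iotaIso G.α).comp ι) (iota F.α) (opNorm_iota_le F.α)
  refine compWH_mem_and_nrm_le_of_factorization (B := opInj A) hv
    (fun H T hT => hA.nrm_nonneg _ _ _ hT) hιf ?_
  intro H T g hT hg hfg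
  obtain ⟨H₀, j, S, g₀, hj, hSj, hg₀, hnorm, hfS⟩ :=
    exists_factorization_through_isometry hU ι T hg hfg
  have hPS : (iota F.α).comp S = (P.comp ((iota G.α).comp T)).comp j := by
    rw [← hPι]
    ext z : 1
    exact congrArg (fun y => P (iota G.α y)) (DFunLike.congr_fun hSj z)
  obtain ⟨hS, hSle⟩ := hA.opInj_mem_of_iota_comp_eq hT hP hj hPS
  refine ⟨H₀, S, g₀, hS, hg₀, hfS, ?_⟩
  rw [hnorm]
  exact mul_le_mul_of_nonneg_right hSle (hvNorm_nonneg hv g)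

lemma compWH_opInj_isometry_comp (hA : IsNormedOpIdeal A) {E : BanachSp.{u}} {U : Set E.α}
    {v : E.α → ℝ} (hv : IsWeight U v) {F G : BanachSp.{u}} (ι : F.α →ₗᵢ[ℂ] G.α)
    {f : E.α → F.α} (hf : (compWH (opInj A)).mem E U v F f) :
    (compWH (opInj A)).mem E U v G (fun x => ι (f x)) ∧
      (compWH (opInj A)).nrm E U v G (fun x => ι (f x)) ≤ (compWH (opInj A)).nrm E U v F f := by
  obtain ⟨Q, hQ, hQι⟩ := exists_extension_to_linfty (iotaIso F.α)
    ((iotaIso G.α).comp ι).toContinuousLinearMap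
    ((iotaIso G.α).comp ι).norm_toContinuousLinearMap_le
  refine compWH_mem_and_nrm_le_of_factorization (B := opInj A) hv
    (fun H T hT => hA.nrm_nonneg _ _ _ hT) hf ?_
  intro H T g hT hg hfg
  have hQT : (iota G.α).comp (ι.toContinuousLinearMap.comp T) =
      (Q.comp ((iota F.α).comp T)).comp (.id ℂ H.α) := by
    rw [ContinuousLinearMap.comp_id, ← ContinuousLinearMap.comp_assoc]
    exact congrArg (·.comp T) hQι.symm
  obtain ⟨hS, hSle⟩ := hA.opInj_mem_of_iota_comp_eq hT hQ ContinuousLinearMap.norm_id_le hQT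
  exact ⟨H, ι.toContinuousLinearMap.comp T, g, hS, hg, fun x hx => by simp [hfg x hx],
    mul_le_mul_of_nonneg_right hSle (hvNorm_nonneg hv g)⟩

end InjectiveHull

/-- `(A ∘ H_v^∞)^inj = A^inj ∘ H_v^∞` with equal norms; in particular the
latter is injective. -/
theorem injective_hull_of_composition (A : OpAssignment.{u}) (hA : IsNormedOpIdeal A) :
    (∀ (E : BanachSp.{u}) (U : Set E.α) (v : E.α → ℝ), IsOpen U → IsWeight U v →
      ∀ (F : BanachSp.{u}) (f : E.α → F.α),
        ((whInj (compWH A)).mem E U v F f ↔ (compWH (opInj A)).mem E U v F f) ∧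
        ((whInj (compWH A)).mem E U v F f →
          (whInj (compWH A)).nrm E U v F f = (compWH (opInj A)).nrm E U v F f)) ∧
    WHInjective (compWH (opInj A)) := by
  refine ⟨(whInj_compWH_le_compWH_opInj hA).mem_iff_and_nrm_eq
    (compWH_opInj_le_whInj_compWH hA), fun E U v hU hv F G f _ ι hιf => ?_⟩
  obtain ⟨hf, hle⟩ := compWH_opInj_of_isometry_comp hA hU hv ι hιf
  exact ⟨hf, le_antisymm hle (compWH_opInj_isometry_comp hA hv ι hf).2⟩

end
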